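/- Let Ω ⊆ ℝ³ be open and τ : Ω → Sym a twice continuously differentiable field of symmetric 3×3 matrices. Then Ξ⁻¹(curl τ) = (curl τ)ᵀ at every point (since curl τ is trace-free), and the matrix field J τ = curl((curl τ)ᵀ) is symmetric on Ω. -/

import Mathlib

open Matrix

/-- `Ξ⁻¹ μ = μᵀ − (1/2)tr(μ)·I` on 3×3 real matrices. -/
noncomputable def XiInv (μ : Matrix (Fin 3) (Fin 3) ℝ) : Matrix (Fin 3) (Fin 3) ℝ :=
  μᵀ - ((1 / 2 : ℝ) * Matrix.trace μ) • (1 : Matrix (Fin 3) (Fin 3) ℝ)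

/-- The partial derivative `∂ⱼ f` of a scalar field on `ℝ³`. -/
noncomputable def pd (j : Fin 3) (f : (Fin 3 → ℝ) → ℝ) (x : Fin 3 → ℝ) : ℝ :=
  fderiv ℝ f x (Pi.single j 1)

/-- The curl of a vector field `u : ℝ³ → ℝ³`. -/
noncomputable def curlVec (u : (Fin 3 → ℝ) → (Fin 3 → ℝ)) (x : Fin 3 → ℝ) : Fin 3 → ℝ :=
  ![pd 1 (fun y => u y 2) x - pd 2 (fun y => u y 1) x,
    pd 2 (fun y => u y 0) x - pd 0 (fun y => u y 2) x,
    pd 0 (fun y => u y 1) x - pd 1 (fun y => u y 0) x]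

/-- The row-wise curl of a matrix field. -/
noncomputable def curlMat (τ : (Fin 3 → ℝ) → Matrix (Fin 3) (Fin 3) ℝ)
    (x : Fin 3 → ℝ) : Matrix (Fin 3) (Fin 3) ℝ :=
  Matrix.of fun i j => curlVec (fun y => τ y i) x j

/-! In index notation `(curl τ)ᵢⱼ = εⱼₖₗ ∂ₖτᵢₗ`, so `tr (curl τ) = εᵢₖₗ ∂ₖτᵢₗ` vanishes: `ε` is
antisymmetric and `∂ₖτ` symmetric in `(i, l)`. Likewise `Jᵢⱼ = εⱼₖₗ εᵢₘₙ ∂ₖ∂ₘτₗₙ`, and exchanging the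
summation pairs `(k, l) ↔ (m, n)`, using the symmetry of second derivatives (Schwarz) and of `τ`,
turns this into `Jⱼᵢ`. -/

open Filter Topology

section PartialDerivatives

variable {f g : (Fin 3 → ℝ) → ℝ} {x : Fin 3 → ℝ}

lemma pd_eventuallyEq (h : f =ᶠ[𝓝 x] g) (j : Fin 3) : pd j f =ᶠ[𝓝 x] pd j g := by
  filter_upwards [h.fderiv (𝕜 := ℝ)] with y hy
  simp only [pd, hy]

lemma pd_congr (h : f =ᶠ[𝓝 x] g) (j : Fin 3) : pd j f x = pd j g x :=
  (pd_eventuallyEq h j).eq_of_nhds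

lemma pd_const_mul (c : ℝ) (f : (Fin 3 → ℝ) → ℝ) (x : Fin 3 → ℝ) (j : Fin 3) :
    pd j (fun y => c * f y) x = c * pd j f x := by
  change fderiv ℝ (c • f) x _ = _
  rw [fderiv_const_smul_field]
  rfl

lemma pd_fun_sum {ι : Type*} (s : Finset ι) {F : ι → (Fin 3 → ℝ) → ℝ}
    (hF : ∀ i ∈ s, DifferentiableAt ℝ (F i) x) (j : Fin 3) :
    pd j (fun y => ∑ i ∈ s, F i y) x = ∑ i ∈ s, pd j (F i) x := by
  simp only [pd, fderiv_fun_sum hF, _root_.sum_apply]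

lemma ContDiffAt.differentiableAt_pd (hf : ContDiffAt ℝ 2 f x) (j : Fin 3) :
    DifferentiableAt ℝ (pd j f) x :=
  ((hf.fderiv_right (m := 1) (by norm_num)).differentiableAt one_ne_zero).clm_apply
    (differentiableAt_const _)

lemma ContDiffAt.pd_pd_comm (hf : ContDiffAt ℝ 2 f x) (a c : Fin 3) :
    pd a (pd c f) x = pd c (pd a f) x := by
  have hd : DifferentiableAt ℝ (fderiv ℝ f) x :=
    (hf.fderiv_right (m := 1) (by norm_num)).differentiableAt one_ne_zero
  have pd_pd_eq : ∀ a c,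
      pd a (pd c f) x = fderiv ℝ (fderiv ℝ f) x (Pi.single a 1) (Pi.single c 1) := by
    intro a c
    change fderiv ℝ (fun y => fderiv ℝ f y (Pi.single c 1)) x _ = _
    simp [fderiv_clm_apply hd (differentiableAt_const _)]
  rw [pd_pd_eq, pd_pd_eq]
  exact (hf.isSymmSndFDerivAt (by simp [minSmoothness_of_isRCLikeNormedField])).eq _ _

end PartialDerivatives

def leviCivita (i j k : Fin 3) : ℝ := (Pi.single i 1 ⨯₃ Pi.single j 1) k

lemma leviCivita_swap (i j k : Fin 3) : leviCivita k j i = -leviCivita i j k := by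
  fin_cases i <;> fin_cases j <;> fin_cases k <;> simp [leviCivita, cross_apply]

lemma curlVec_apply (u : (Fin 3 → ℝ) → (Fin 3 → ℝ)) (x : Fin 3 → ℝ) (j : Fin 3) :
    curlVec u x j = ∑ k, ∑ l, leviCivita j k l * pd k (fun y => u y l) x := by
  fin_cases j <;> simp [curlVec, leviCivita, cross_apply, Fin.sum_univ_three] <;> ring

lemma sum_sum_eq_zero_of_antisymm {ι : Type*} [Fintype ι] {A : ι → ι → ℝ}
    (hA : ∀ i j, A j i = -A i j) : ∑ i, ∑ j, A i j = 0 := by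
  have : ∑ i, ∑ j, A i j = -∑ i, ∑ j, A i j :=
    calc ∑ i, ∑ j, A i j = ∑ i, ∑ j, A j i := Finset.sum_comm
      _ = -∑ i, ∑ j, A i j := by simp only [← Finset.sum_neg_distrib, ← hA]
  linarith

lemma sum_sum_sum_sum_comm {α β γ δ M : Type*} [Fintype α] [Fintype β] [Fintype γ] [Fintype δ]
    [AddCommMonoid M] (F : α → β → γ → δ → M) :
    ∑ a, ∑ b, ∑ c, ∑ d, F a b c d = ∑ c, ∑ d, ∑ a, ∑ b, F a b c d :=
  calc ∑ a, ∑ b, ∑ c, ∑ d, F a b c d = ∑ a, ∑ c, ∑ d, ∑ b, F a b c d :=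
        Fintype.sum_congr _ _ fun a => by
          rw [Finset.sum_comm]; exact Fintype.sum_congr _ _ fun c => Finset.sum_comm
    _ = ∑ c, ∑ d, ∑ a, ∑ b, F a b c d := by
        rw [Finset.sum_comm]; exact Fintype.sum_congr _ _ fun c => Finset.sum_comm

lemma XiInv_eq_transpose_of_trace_eq_zero {μ : Matrix (Fin 3) (Fin 3) ℝ} (h : trace μ = 0) :
    XiInv μ = μᵀ := by
  simp [XiInv, h]

section SymmetricField

variable {τ : (Fin 3 → ℝ) → Matrix (Fin 3) (Fin 3) ℝ} {x : Fin 3 → ℝ}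

lemma eventuallyEq_entry_swap (hsym : ∀ᶠ y in 𝓝 x, (τ y)ᵀ = τ y) (i l : Fin 3) :
    (fun y => τ y i l) =ᶠ[𝓝 x] fun y => τ y l i :=
  hsym.mono fun _ hy => congrFun (congrFun hy l) i

lemma trace_curlMat_eq_zero (hsym : ∀ᶠ y in 𝓝 x, (τ y)ᵀ = τ y) :
    trace (curlMat τ x) = 0 := by
  simp only [trace, diag_apply, curlMat, of_apply, curlVec_apply]
  rw [Finset.sum_comm]
  refine Finset.sum_eq_zero fun k _ => sum_sum_eq_zero_of_antisymm fun i l => ?_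
  rw [leviCivita_swap, pd_congr (eventuallyEq_entry_swap hsym l i) k, neg_mul]

lemma curlMat_transpose_curlMat_apply (hτ : ∀ i j, ContDiffAt ℝ 2 (fun y => τ y i j) x)
    (i j : Fin 3) :
    curlMat (fun y => (curlMat τ y)ᵀ) x i j = ∑ k, ∑ l, ∑ m, ∑ n,
      leviCivita j k l * leviCivita i m n * pd k (pd m fun y => τ y l n) x := by
  have hdiff : ∀ l m n : Fin 3,
      DifferentiableAt ℝ (fun y => leviCivita i m n * pd m (fun z => τ z l n) y) x :=
    fun l m n => ((hτ l n).differentiableAt_pd m).const_mul _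
  have inner : ∀ l, (fun y => (curlMat τ y)ᵀ i l)
      = fun y => ∑ m, ∑ n, leviCivita i m n * pd m (fun z => τ z l n) y := by
    intro l; ext y; rw [transpose_apply, curlMat, of_apply, curlVec_apply]
  rw [curlMat, of_apply, curlVec_apply]
  refine Finset.sum_congr rfl fun k _ => Finset.sum_congr rfl fun l _ => ?_
  rw [inner, pd_fun_sum _ fun m _ => DifferentiableAt.fun_sum fun n _ => hdiff l m n,
    Finset.mul_sum]
  refine Finset.sum_congr rfl fun m _ => ?_
  rw [pd_fun_sum _ fun n _ => hdiff l m n, Finset.mul_sum]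
  refine Finset.sum_congr rfl fun n _ => ?_
  rw [pd_const_mul, mul_assoc]

lemma isSymm_curlMat_transpose_curlMat (hτ : ∀ i j, ContDiffAt ℝ 2 (fun y => τ y i j) x)
    (hsym : ∀ᶠ y in 𝓝 x, (τ y)ᵀ = τ y) :
    (curlMat (fun y => (curlMat τ y)ᵀ) x).IsSymm := by
  have hD : ∀ k m l n : Fin 3,
      pd k (pd m fun y => τ y l n) x = pd m (pd k fun y => τ y n l) x := fun k m l n => by
    rw [(hτ l n).pd_pd_comm]
    exact pd_congr (pd_eventuallyEq (eventuallyEq_entry_swap hsym l n) k) m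
  ext i j
  rw [transpose_apply, curlMat_transpose_curlMat_apply hτ, curlMat_transpose_curlMat_apply hτ,
    sum_sum_sum_sum_comm]
  refine Fintype.sum_congr _ _ fun k => Fintype.sum_congr _ _ fun l => Fintype.sum_congr _ _
    fun m => Fintype.sum_congr _ _ fun n => ?_
  rw [hD]
  ring

end SymmetricField

/-- If `τ : Ω → Sym` is a `C²` symmetric matrix field on an open `Ω ⊆ ℝ³`, then
`Ξ⁻¹(curl τ) = (curl τ)ᵀ` pointwise (since `curl τ` is trace-free), and
`J τ = curl((curl τ)ᵀ)` is a symmetric matrix field on `Ω`. -/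
theorem J_symmetric_on_sym (Ω : Set (Fin 3 → ℝ)) (hΩ : IsOpen Ω)
    (τ : (Fin 3 → ℝ) → Matrix (Fin 3) (Fin 3) ℝ)
    (hτ : ∀ i j, ContDiffOn ℝ 2 (fun y => τ y i j) Ω)
    (hsym : ∀ x ∈ Ω, (τ x)ᵀ = τ x) :
    ∀ x ∈ Ω,
      XiInv (curlMat τ x) = (curlMat τ x)ᵀ ∧
      (curlMat (fun y => (curlMat τ y)ᵀ) x)ᵀ = curlMat (fun y => (curlMat τ y)ᵀ) x := by
  intro x hx
  have hΩx : Ω ∈ 𝓝 x := hΩ.mem_nhds hx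
  have hsym_near : ∀ᶠ y in 𝓝 x, (τ y)ᵀ = τ y := eventually_of_mem hΩx hsym
  exact ⟨XiInv_eq_transpose_of_trace_eq_zero (trace_curlMat_eq_zero hsym_near),
    isSymm_curlMat_transpose_curlMat (fun i j => (hτ i j).contDiffAt hΩx) hsym_near⟩
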